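/- arXiv:1706.01945 — 2 statements merged into one kernel-verified Lean document; each statement's English description precedes it below -/
import Mathlib

section
/- Let κ, μ be positive integers with κ ≥ 2^{⌊log₂ μ⌋+1}. Define ρ = ⌊log₂ μ⌋ + 1, ν = κ − Σ_{i=1}^{ρ} 2^{i−1} = κ − (2^ρ − 1), and η = ⌊ν/μ⌋. Then the bounded-coefficient encoding c consisting of the coefficients (2^0, 2^1, ..., 2^{ρ−1}, μ repeated η times, and ν − ημ if ν − ημ ≠ 0) is κ-complete: the set of values {Σ_j c_j y_j : y ∈ {0,1}^d} equals {0, 1, ..., κ}. -/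
/-!
Call a list of naturals complete when its sublist sums are exactly `0, …, l.sum`. Appending an
element `x ≤ l.sum + 1` to a complete list keeps it complete: the new values `l.sum + 1, …,
l.sum + x` are `x` plus an old value. The powers `2^0, …, 2^{ρ-1}` are complete with sum
`2^ρ - 1`, and every later coefficient (`μ`, then the residual `ν mod μ < μ`) is at most
`μ < 2^ρ`, so the whole encoding is complete; its sum is `2^ρ - 1 + ν = κ`.
-/

/-- The bounded-coefficient encoding of Algorithm 1 (general case), as a list of
coefficients: `2^0, …, 2^{ρ-1}`, `η` copies of `μ`, and the residual `ν - η·μ` if nonzero. -/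
def boundedCoeffEncoding (κ μ : ℕ) : List ℕ :=
  let ρ := Nat.log 2 μ + 1
  let ν := κ - (2 ^ ρ - 1)
  let η := ν / μ
  (List.range ρ).map (2 ^ ·) ++ List.replicate η μ ++
    (if ν - η * μ ≠ 0 then [ν - η * μ] else [])

def SublistSumComplete (l : List ℕ) : Prop :=
  ∀ m ≤ l.sum, ∃ t : List ℕ, t.Sublist l ∧ t.sum = m

namespace SublistSumComplete

theorem nil : SublistSumComplete [] := fun m hm => ⟨[], List.Sublist.slnil, by simp_all⟩

variable {l : List ℕ}

theorem append_singleton (hl : SublistSumComplete l) {x : ℕ} (hx : x ≤ l.sum + 1) :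
    SublistSumComplete (l ++ [x]) := by
  intro m hm
  rw [List.sum_append, List.sum_singleton] at hm
  by_cases hm' : m ≤ l.sum
  · obtain ⟨t, ht, rfl⟩ := hl m hm'
    exact ⟨t, ht.trans (List.sublist_append_left _ _), rfl⟩
  · obtain ⟨t, ht, hsum⟩ := hl (m - x) (by omega)
    refine ⟨t ++ [x], ht.append (List.Sublist.refl _), ?_⟩
    rw [List.sum_append, List.sum_singleton]
    omega

theorem append_replicate (hl : SublistSumComplete l) {x : ℕ} (hx : x ≤ l.sum + 1) (n : ℕ) :
    SublistSumComplete (l ++ List.replicate n x) := by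
  induction n with
  | zero => simpa using hl
  | succ n ih =>
    rw [List.replicate_succ', ← List.append_assoc]
    exact ih.append_singleton (by simp only [List.sum_append]; omega)

theorem exists_sublist_sum_eq_iff (hl : SublistSumComplete l) (m : ℕ) :
    (∃ t : List ℕ, t.Sublist l ∧ t.sum = m) ↔ m ≤ l.sum := by
  refine ⟨?_, hl m⟩
  rintro ⟨t, ht, rfl⟩
  exact ht.sum_le_sum fun _ _ => Nat.zero_le _

end SublistSumComplete

theorem sum_map_two_pow_range (ρ : ℕ) : ((List.range ρ).map (2 ^ ·)).sum = 2 ^ ρ - 1 := by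
  induction ρ with
  | zero => rfl
  | succ n ih =>
    rw [List.range_succ, List.map_append, List.sum_append, ih, pow_succ]
    have : 1 ≤ 2 ^ n := Nat.one_le_two_pow
    simp only [List.map_cons, List.map_nil, List.sum_singleton]
    omega

theorem sublistSumComplete_map_two_pow_range (ρ : ℕ) :
    SublistSumComplete ((List.range ρ).map (2 ^ ·)) := by
  induction ρ with
  | zero => exact .nil
  | succ n ih =>
    rw [List.range_succ, List.map_append]
    have : 1 ≤ 2 ^ n := Nat.one_le_two_pow
    exact ih.append_singleton (by simp only [sum_map_two_pow_range]; omega)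

theorem sum_boundedCoeffEncoding {κ μ : ℕ} (h : 2 ^ (Nat.log 2 μ + 1) ≤ κ) :
    (boundedCoeffEncoding κ μ).sum = κ := by
  dsimp only [boundedCoeffEncoding]
  set ν := κ - (2 ^ (Nat.log 2 μ + 1) - 1)
  have hdiv : ν / μ * μ ≤ ν := Nat.div_mul_le_self ν μ
  have hpow : 1 ≤ 2 ^ (Nat.log 2 μ + 1) := Nat.one_le_two_pow
  split_ifs <;>
    simp only [List.sum_append, List.sum_replicate, smul_eq_mul, sum_map_two_pow_range,
      List.sum_singleton, List.sum_nil] <;> omega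

theorem sublistSumComplete_boundedCoeffEncoding (κ : ℕ) {μ : ℕ} (hμ : 1 ≤ μ) :
    SublistSumComplete (boundedCoeffEncoding κ μ) := by
  dsimp only [boundedCoeffEncoding]
  set ρ := Nat.log 2 μ + 1
  set ν := κ - (2 ^ ρ - 1)
  have hμρ : μ < 2 ^ ρ := Nat.lt_pow_succ_log_self (by norm_num) μ
  have hres : ν - ν / μ * μ < μ := by rw [← Nat.mod_eq_sub_div_mul]; exact Nat.mod_lt ν hμ
  have hbase := (sublistSumComplete_map_two_pow_range ρ).append_replicate (x := μ)
    (by rw [sum_map_two_pow_range]; omega) (ν / μ)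
  have hpow : 1 ≤ 2 ^ ρ := Nat.one_le_two_pow
  split_ifs
  · exact hbase.append_singleton (by
      simp only [List.sum_append, sum_map_two_pow_range]; omega)
  · rwa [List.append_nil]

theorem boundedCoeffEncoding_complete_general (κ μ : ℕ) (hμ : 1 ≤ μ)
    (h : 2 ^ (Nat.log 2 μ + 1) ≤ κ) :
    ∀ m : ℕ, (∃ t : List ℕ, t.Sublist (boundedCoeffEncoding κ μ) ∧ t.sum = m) ↔ m ≤ κ := by
  intro m
  rw [(sublistSumComplete_boundedCoeffEncoding κ hμ).exists_sublist_sum_eq_iff,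
    sum_boundedCoeffEncoding h]

theorem boundedCoeffEncoding_complete (κ μ : ℕ) (hμ : 1 ≤ μ) (hκ : 1 ≤ κ)
    (h : 2 ^ (Nat.log 2 μ + 1) ≤ κ) :
    ∀ m : ℕ, (∃ t : List ℕ, t.Sublist (boundedCoeffEncoding κ μ) ∧ t.sum = m) ↔ m ≤ κ :=
  boundedCoeffEncoding_complete_general κ μ hμ h
end

section
/- Let κ, μ be positive integers with κ ≥ 2^{⌊log₂ μ⌋+1}, ρ = ⌊log₂ μ⌋+1, ν = κ − (2^ρ − 1), η = ⌊ν/μ⌋. The width of the bounded-coefficient encoding equals ρ + η + 1 if ν − ημ ≠ 0 and ρ + η otherwise, and this width is minimal: any κ-complete encoding c ∈ ℤ_+^d with all coefficients c_j ≤ μ satisfies d ≥ ρ + η + (if ν − ημ ≠ 0 then 1 else 0). -/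
/-! Sort the coefficients increasingly. Completeness forces each coefficient to exceed the sum of
the smaller ones by at most one (otherwise that sum plus one is not representable), so the `ρ`
smallest coefficients sum to at most `2 ^ ρ - 1`; the other `d - ρ` are at most `μ` each. Hence
`κ ≤ 2 ^ ρ - 1 + (d - ρ) * μ`, i.e. `d - ρ ≥ ⌈ν / μ⌉`. Counting subsets gives `κ < 2 ^ d`, so
`ρ < d` and the split makes sense. -/

open Finset

section
variable {d : ℕ} (c : Fin d → ℕ)

theorem sum_univ_eq_of_complete {κ : ℕ}
    (hc : ∀ m, (∃ S : Finset (Fin d), ∑ i ∈ S, c i = m) ↔ m ≤ κ) : ∑ i, c i = κ := by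
  obtain ⟨S, hS⟩ := (hc κ).mpr le_rfl
  refine le_antisymm ((hc _).mp ⟨univ, rfl⟩) ?_
  exact hS ▸ sum_le_sum_of_subset (subset_univ S)

theorem add_one_le_two_pow_of_complete {κ : ℕ}
    (hc : ∀ m ≤ κ, ∃ S : Finset (Fin d), ∑ i ∈ S, c i = m) : κ + 1 ≤ 2 ^ d := by
  have hsub : range (κ + 1) ⊆ (univ : Finset (Fin d)).powerset.image (fun S => ∑ i ∈ S, c i) := by
    intro m hm
    obtain ⟨S, hS⟩ := hc m (Nat.lt_succ_iff.mp (mem_range.mp hm))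
    exact mem_image.mpr ⟨S, mem_powerset.mpr (subset_univ S), hS⟩
  calc κ + 1 = #(range (κ + 1)) := (card_range _).symm
    _ ≤ #((univ : Finset (Fin d)).powerset) := (card_le_card hsub).trans card_image_le
    _ = 2 ^ d := by simp

theorem exists_sum_comp_perm_iff (σ : Equiv.Perm (Fin d)) (m : ℕ) :
    (∃ S : Finset (Fin d), ∑ i ∈ S, c (σ i) = m) ↔ ∃ S : Finset (Fin d), ∑ i ∈ S, c i = m := by
  constructor
  · rintro ⟨S, rfl⟩
    exact ⟨S.map σ.toEmbedding, sum_map _ _ _⟩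
  · rintro ⟨S, rfl⟩
    refine ⟨S.map σ.symm.toEmbedding, ?_⟩
    simp [sum_map]

theorem le_sum_Iio_add_one_of_monotone (hmono : Monotone c)
    (hc : ∀ m ≤ ∑ i, c i, ∃ S : Finset (Fin d), ∑ i ∈ S, c i = m) (j : Fin d) :
    c j ≤ ∑ i ∈ Iio j, c i + 1 := by
  by_contra! hlt
  have htot : ∑ i ∈ Iio j, c i + 1 ≤ ∑ i, c i := by
    have hins := sum_le_sum_of_subset (f := c) (subset_univ (insert j (Iio j)))
    rw [sum_insert (by simp)] at hins
    omega
  obtain ⟨S, hS⟩ := hc _ htot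
  by_cases hsub : S ⊆ Iio j
  · have hS_le := sum_le_sum_of_subset (f := c) hsub
    omega
  · obtain ⟨k, hkS, hkj⟩ := not_subset.mp hsub
    have hjk : c j ≤ c k := hmono (not_lt.mp (by simpa using hkj))
    have hk_le := single_le_sum (f := c) (fun i _ => Nat.zero_le _) hkS
    omega

theorem sum_Iio_add_one_le_two_pow (h : ∀ j, c j ≤ ∑ i ∈ Iio j, c i + 1) (j : Fin d) :
    ∑ i ∈ Iio j, c i + 1 ≤ 2 ^ (j : ℕ) := by
  obtain ⟨k, hk⟩ := j
  induction k with
  | zero =>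
    have : Iio (⟨0, hk⟩ : Fin d) = ∅ := by ext i; simp [Fin.lt_def]
    simp [this]
  | succ k ih =>
    have hIio : Iio (⟨k + 1, hk⟩ : Fin d) = insert ⟨k, by omega⟩ (Iio ⟨k, by omega⟩) := by
      ext i; simp only [mem_Iio, mem_insert, Fin.lt_def, Fin.ext_iff]; omega
    rw [hIio, sum_insert (by simp), pow_succ]
    have hstep := h ⟨k, by omega⟩
    have ih := ih (by omega)
    simp only at ih ⊢
    omega

theorem sum_add_one_le_two_pow_add_mul_of_monotone {μ : ℕ} (hmono : Monotone c)
    (hc : ∀ m ≤ ∑ i, c i, ∃ S : Finset (Fin d), ∑ i ∈ S, c i = m) (hle : ∀ j, c j ≤ μ)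
    (j : Fin d) : ∑ i, c i + 1 ≤ 2 ^ (j : ℕ) + (d - j) * μ := by
  have hsplit : ∑ i, c i = ∑ i ∈ Iio j, c i + ∑ i ∈ Ici j, c i := by
    rw [← sum_union (disjoint_left.mpr fun i h1 h2 => (mem_Iio.mp h1).not_ge (mem_Ici.mp h2))]
    congr 1; ext i; simp [lt_or_ge]
  have hhead := sum_Iio_add_one_le_two_pow c (le_sum_Iio_add_one_of_monotone c hmono hc) j
  have htail : ∑ i ∈ Ici j, c i ≤ (d - j) * μ := by
    simpa [Fin.card_Ici] using sum_le_card_nsmul (Ici j) c μ fun i _ => hle i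
  omega

end

theorem ceil_div_le_of_le_mul {ν μ n : ℕ} (h : ν ≤ n * μ) :
    ν / μ + (if ν - ν / μ * μ ≠ 0 then 1 else 0) ≤ n := by
  rcases Nat.eq_zero_or_pos μ with rfl | hμ
  · simp_all
  have hq : ν / μ ≤ n := Nat.div_le_of_le_mul (by rwa [mul_comm])
  split_ifs with hr
  · by_contra! hn
    have hmul : n * μ ≤ ν / μ * μ := Nat.mul_le_mul_right μ (by omega)
    omega
  · omega

theorem boundedCoeffEncoding_min_width_general (κ μ : ℕ)
    (h : 2 ^ (Nat.log 2 μ + 1) ≤ κ)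
    (ρ ν η : ℕ) (hρ : ρ = Nat.log 2 μ + 1) (hν : ν = κ - (2 ^ ρ - 1)) (hη : η = ν / μ) :
    (boundedCoeffEncoding κ μ).length = ρ + η + (if ν - η * μ ≠ 0 then 1 else 0) ∧
    ∀ (d : ℕ) (c : Fin d → ℕ), (∀ j, 0 < c j) → (∀ j, c j ≤ μ) →
      (∀ m : ℕ, (∃ S : Finset (Fin d), ∑ i ∈ S, c i = m) ↔ m ≤ κ) →
      d ≥ ρ + η + (if ν - η * μ ≠ 0 then 1 else 0) := by
  subst hρ hν hη
  refine ⟨?_, fun d c _ hle hc => ?_⟩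
  · simp only [boundedCoeffEncoding, List.length_append, List.length_map, List.length_range,
      List.length_replicate]
    split <;> simp
  set σ := Tuple.sort c
  have hcσ : ∀ m, (∃ S : Finset (Fin d), ∑ i ∈ S, c (σ i) = m) ↔ m ≤ κ := fun m =>
    (exists_sum_comp_perm_iff c σ m).trans (hc m)
  have hsum := sum_univ_eq_of_complete _ hcσ
  have hρd : Nat.log 2 μ + 1 < d := by
    have hcount := add_one_le_two_pow_of_complete _ fun m hm => (hcσ m).mpr hm
    exact (Nat.pow_lt_pow_iff_right (a := 2) (by norm_num)).mp (by omega)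
  have hbound := sum_add_one_le_two_pow_add_mul_of_monotone (c ∘ σ) (Tuple.monotone_sort c)
    (fun m hm => (hcσ m).mpr (hsum ▸ hm)) (fun j => hle (σ j)) ⟨_, hρd⟩
  simp only [Function.comp_apply] at hbound
  have hceil := ceil_div_le_of_le_mul (n := d - (Nat.log 2 μ + 1))
    (ν := κ - (2 ^ (Nat.log 2 μ + 1) - 1)) (μ := μ) (by omega)
  omega

theorem boundedCoeffEncoding_min_width (κ μ : ℕ) (hμ : 1 ≤ μ)
    (h : 2 ^ (Nat.log 2 μ + 1) ≤ κ)
    (ρ ν η : ℕ) (hρ : ρ = Nat.log 2 μ + 1) (hν : ν = κ - (2 ^ ρ - 1)) (hη : η = ν / μ) :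
    (boundedCoeffEncoding κ μ).length = ρ + η + (if ν - η * μ ≠ 0 then 1 else 0) ∧
    ∀ (d : ℕ) (c : Fin d → ℕ), (∀ j, 0 < c j) → (∀ j, c j ≤ μ) →
      (∀ m : ℕ, (∃ S : Finset (Fin d), ∑ i ∈ S, c i = m) ↔ m ≤ κ) →
      d ≥ ρ + η + (if ν - η * μ ≠ 0 then 1 else 0) :=
  boundedCoeffEncoding_min_width_general κ μ h ρ ν η hρ hν hη
end
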